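/- Let A be a real m×n matrix, let x, s ∈ ℝⁿ have all components positive, μ = xᵀs/n, and let D be the diagonal matrix with D_ii = √(x_i/s_i). Let ν ≥ 0, let x⁰, s⁰, x̄, s̄ ∈ ℝⁿ and λ⁰, λ̄ ∈ ℝᵐ, and suppose for i = 1, 2, 3 the triples (δxⁱ, δλⁱ, δsⁱ) satisfy A δxⁱ = 0, Aᵀ δλⁱ + δsⁱ = 0, with s ∘ δx¹ + x ∘ δs¹ = x ∘ s, s ∘ δx² + x ∘ δs² = −ν · s ∘ (x⁰ − x̄), and s ∘ δx³ + x ∘ δs³ = −ν · x ∘ (s⁰ − s̄). If ẋ = δx¹ + δx² + δx³ + ν (x⁰ − x̄) and ṡ = δs¹ + δs² + δs³ + ν (s⁰ − s̄), then ‖D ṡ‖ ≤ √(n μ) + ‖D δs²‖ + ‖D⁻¹ δx³‖ and ‖D⁻¹ ẋ‖ ≤ √(n μ) + ‖D δs²‖ + ‖D⁻¹ δx³‖. -/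

import Mathlib

/-!
Scaling by `D⁻¹` on the primal and `D` on the dual side turns `s ∘ u + x ∘ v = w` into
`D⁻¹u + Dv = w / √(x ∘ s)`. For the first system this splits `√(x ∘ s)`, whose norm is `√(nμ)`,
into `D⁻¹δx¹` and `Dδs¹`, which are orthogonal because `δx¹ ∈ ker A` and `δs¹ ∈ range Aᵀ`;
by Pythagoras each has norm at most `√(nμ)`. The second and third systems give
`D⁻¹(δx² + ν(x⁰ - x̄)) = -Dδs²` and `D(δs³ + ν(s⁰ - s̄)) = -D⁻¹δx³`, so `Dṡ` and `D⁻¹ẋ` are each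
a sum of three vectors with the claimed norm bounds.
-/

open Matrix

/-- The Euclidean norm of a vector in `ℝⁿ`. -/
noncomputable def euclNorm {n : ℕ} (v : Fin n → ℝ) : ℝ :=
  Real.sqrt (∑ i, v i ^ 2)

/-- `D⁻¹ v`, where `D = diag(√(x_i/s_i))`. -/
noncomputable def dInvApp {n : ℕ} (x s v : Fin n → ℝ) : Fin n → ℝ :=
  fun i => Real.sqrt (s i / x i) * v i

/-- `D v`, where `D = diag(√(x_i/s_i))`. -/
noncomputable def dApp {n : ℕ} (x s v : Fin n → ℝ) : Fin n → ℝ :=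
  fun i => Real.sqrt (x i / s i) * v i

lemma euclNorm_eq_norm_toLp {n : ℕ} (v : Fin n → ℝ) : euclNorm v = ‖WithLp.toLp 2 v‖ := by
  simp [euclNorm, EuclideanSpace.norm_eq]

lemma euclNorm_neg {n : ℕ} (v : Fin n → ℝ) : euclNorm (-v) = euclNorm v := by
  simp only [euclNorm_eq_norm_toLp, WithLp.toLp_neg, norm_neg]

lemma euclNorm_add₃_le {n : ℕ} (u v w : Fin n → ℝ) :
    euclNorm (u + v + w) ≤ euclNorm u + euclNorm v + euclNorm w := by
  simpa only [euclNorm_eq_norm_toLp, WithLp.toLp_add] using norm_add₃_le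

lemma euclNorm_le_euclNorm_add_of_dotProduct_eq_zero {n : ℕ} {u v : Fin n → ℝ}
    (h : u ⬝ᵥ v = 0) : euclNorm u ≤ euclNorm (u + v) := by
  have horth : inner ℝ (WithLp.toLp 2 u) (WithLp.toLp 2 v) = 0 := by
    simpa [EuclideanSpace.inner_toLp_toLp, dotProduct_comm] using h
  rw [euclNorm_eq_norm_toLp, euclNorm_eq_norm_toLp, WithLp.toLp_add]
  refine le_of_pow_le_pow_left₀ two_ne_zero (norm_nonneg _) ?_
  rw [norm_add_sq_real, horth]
  nlinarith [norm_nonneg (WithLp.toLp 2 v)]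

lemma euclNorm_sqrt_mul {n : ℕ} {x s : Fin n → ℝ} (hx : ∀ i, 0 ≤ x i) (hs : ∀ i, 0 ≤ s i) :
    euclNorm (fun i => √(x i * s i)) = √(x ⬝ᵥ s) := by
  simp only [euclNorm, dotProduct, Real.sq_sqrt (mul_nonneg (hx _) (hs _))]

lemma natCast_mul_dotProduct_div {n : ℕ} (x s : Fin n → ℝ) : (n : ℝ) * (x ⬝ᵥ s / n) = x ⬝ᵥ s := by
  rcases n.eq_zero_or_pos with rfl | _
  · simp [dotProduct] -- `x ⬝ᵥ s / 0 = 0`, and the empty dot product is `0` as well.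
  · field_simp

lemma Matrix.dotProduct_eq_zero_of_mulVec_eq_zero {R m n : Type*} [CommRing R] [Fintype m]
    [Fintype n]
    {A : Matrix m n R} {u v : n → R} {y : m → R}
    (hu : A *ᵥ u = 0) (hv : Aᵀ *ᵥ y + v = 0) : u ⬝ᵥ v = 0 := by
  rw [eq_neg_of_add_eq_zero_right hv, dotProduct_neg, dotProduct_mulVec, vecMul_transpose, hu,
    zero_dotProduct, neg_zero]

lemma dApp_add {n : ℕ} (x s u v : Fin n → ℝ) : dApp x s (u + v) = dApp x s u + dApp x s v := by
  ext i; exact mul_add _ _ _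

lemma dInvApp_add {n : ℕ} (x s u v : Fin n → ℝ) :
    dInvApp x s (u + v) = dInvApp x s u + dInvApp x s v := by
  ext i; exact mul_add _ _ _

lemma sqrt_div_mul_add_sqrt_div_mul {a b : ℝ} (ha : 0 < a) (hb : 0 < b) (u v : ℝ) :
    √(b / a) * u + √(a / b) * v = (b * u + a * v) / √(a * b) := by
  have hsa := Real.sq_sqrt ha.le
  have hsb := Real.sq_sqrt hb.le
  have : √a ≠ 0 := (Real.sqrt_pos.2 ha).ne'
  have : √b ≠ 0 := (Real.sqrt_pos.2 hb).ne'
  rw [Real.sqrt_div hb.le, Real.sqrt_div ha.le, Real.sqrt_mul ha.le]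
  field_simp
  rw [hsa, hsb]; ring

lemma dInvApp_add_dApp {n : ℕ} {x s : Fin n → ℝ} (hx : ∀ i, 0 < x i) (hs : ∀ i, 0 < s i)
    (u v : Fin n → ℝ) :
    dInvApp x s u + dApp x s v = fun i => (s i * u i + x i * v i) / √(x i * s i) := by
  ext i; exact sqrt_div_mul_add_sqrt_div_mul (hx i) (hs i) (u i) (v i)

lemma dInvApp_dotProduct_dApp {n : ℕ} {x s : Fin n → ℝ} (hx : ∀ i, 0 < x i) (hs : ∀ i, 0 < s i)
    (u v : Fin n → ℝ) : dInvApp x s u ⬝ᵥ dApp x s v = u ⬝ᵥ v := by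
  refine Finset.sum_congr rfl fun i _ => ?_
  have hx' := hx i
  have hs' := hs i
  calc √(s i / x i) * u i * (√(x i / s i) * v i) = √(s i / x i * (x i / s i)) * (u i * v i) := by
        rw [Real.sqrt_mul (by positivity)]; ring
    _ = u i * v i := by
        rw [div_mul_div_comm, mul_comm (s i), div_self (by positivity), Real.sqrt_one, one_mul]

lemma dInvApp_add_dApp_eq_zero {n : ℕ} {x s : Fin n → ℝ} (hx : ∀ i, 0 < x i) (hs : ∀ i, 0 < s i)
    {u v : Fin n → ℝ} (h : ∀ i, s i * u i + x i * v i = 0) : dInvApp x s u + dApp x s v = 0 := by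
  rw [dInvApp_add_dApp hx hs]
  ext i
  rw [h i, zero_div, Pi.zero_apply]

lemma euclNorm_dInvApp_le_and_euclNorm_dApp_le {n : ℕ} {x s u v : Fin n → ℝ}
    (hx : ∀ i, 0 < x i) (hs : ∀ i, 0 < s i) (horth : u ⬝ᵥ v = 0)
    (h : ∀ i, s i * u i + x i * v i = x i * s i) :
    euclNorm (dInvApp x s u) ≤ √(x ⬝ᵥ s) ∧ euclNorm (dApp x s v) ≤ √(x ⬝ᵥ s) := by
  have hsum : euclNorm (dInvApp x s u + dApp x s v) = √(x ⬝ᵥ s) := by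
    rw [dInvApp_add_dApp hx hs, ← euclNorm_sqrt_mul (fun i => (hx i).le) (fun i => (hs i).le)]
    congr! 2 with i
    rw [h i, mul_comm (x i), Real.div_sqrt]
  have horth' : dInvApp x s u ⬝ᵥ dApp x s v = 0 := by rwa [dInvApp_dotProduct_dApp hx hs]
  refine ⟨hsum ▸ euclNorm_le_euclNorm_add_of_dotProduct_eq_zero horth', ?_⟩
  rw [← hsum, add_comm]
  exact euclNorm_le_euclNorm_add_of_dotProduct_eq_zero (by rwa [dotProduct_comm])

theorem newton_direction_splitting_bound_general {m n : ℕ}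
    (A : Matrix (Fin m) (Fin n) ℝ)
    (x s : Fin n → ℝ) (hx : ∀ i, 0 < x i) (hs : ∀ i, 0 < s i)
    (μ ν : ℝ) (hμ : μ = x ⬝ᵥ s / n)
    (x0 s0 xbar sbar : Fin n → ℝ)
    (dx1 dx2 dx3 ds1 ds2 ds3 : Fin n → ℝ) (dl1 : Fin m → ℝ)
    (hA1 : A.mulVec dx1 = 0)
    (hB1 : Aᵀ.mulVec dl1 + ds1 = 0)
    (hr1 : ∀ i, s i * dx1 i + x i * ds1 i = x i * s i)
    (hr2 : ∀ i, s i * dx2 i + x i * ds2 i = -(ν * (s i * (x0 i - xbar i))))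
    (hr3 : ∀ i, s i * dx3 i + x i * ds3 i = -(ν * (x i * (s0 i - sbar i))))
    (xd sd : Fin n → ℝ)
    (hxd : xd = dx1 + dx2 + dx3 + ν • (x0 - xbar))
    (hsd : sd = ds1 + ds2 + ds3 + ν • (s0 - sbar)) :
    euclNorm (dApp x s sd) ≤
      Real.sqrt (n * μ) + euclNorm (dApp x s ds2) + euclNorm (dInvApp x s dx3) ∧
    euclNorm (dInvApp x s xd) ≤
      Real.sqrt (n * μ) + euclNorm (dApp x s ds2) + euclNorm (dInvApp x s dx3) := by
  obtain ⟨hp, hq⟩ := euclNorm_dInvApp_le_and_euclNorm_dApp_le hx hs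
    (dotProduct_eq_zero_of_mulVec_eq_zero hA1 hB1) hr1
  rw [hμ, natCast_mul_dotProduct_div]
  have hx2 : dInvApp x s (dx2 + ν • (x0 - xbar)) = -dApp x s ds2 :=
    eq_neg_of_add_eq_zero_left <| dInvApp_add_dApp_eq_zero hx hs fun i => by
      simp only [Pi.add_apply, Pi.smul_apply, Pi.sub_apply, smul_eq_mul]
      linear_combination hr2 i
  have hs3 : dApp x s (ds3 + ν • (s0 - sbar)) = -dInvApp x s dx3 :=
    eq_neg_of_add_eq_zero_right <| dInvApp_add_dApp_eq_zero hx hs fun i => by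
      simp only [Pi.add_apply, Pi.smul_apply, Pi.sub_apply, smul_eq_mul]
      linear_combination hr3 i
  have hsd' : sd = ds1 + ds2 + (ds3 + ν • (s0 - sbar)) := by rw [hsd]; abel
  have hxd' : xd = dx1 + (dx2 + ν • (x0 - xbar)) + dx3 := by rw [hxd]; abel
  constructor
  · rw [hsd', dApp_add, dApp_add, hs3]
    refine (euclNorm_add₃_le _ _ _).trans ?_
    rw [euclNorm_neg]
    gcongr
  · rw [hxd', dInvApp_add, dInvApp_add, hx2]
    refine (euclNorm_add₃_le _ _ _).trans ?_
    rw [euclNorm_neg]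
    linarith

/-- Lemma 4.3: three-term splitting bound on the Newton direction
`‖Dṡ‖, ‖D⁻¹ẋ‖ ≤ √(nμ) + ‖Dδs²‖ + ‖D⁻¹δx³‖`. -/
theorem newton_direction_splitting_bound {m n : ℕ}
    (A : Matrix (Fin m) (Fin n) ℝ)
    (x s : Fin n → ℝ) (hx : ∀ i, 0 < x i) (hs : ∀ i, 0 < s i)
    (μ ν : ℝ) (hμ : μ = x ⬝ᵥ s / n) (hν : 0 ≤ ν)
    (x0 s0 xbar sbar : Fin n → ℝ) (l0 lbar : Fin m → ℝ)
    (dx1 dx2 dx3 ds1 ds2 ds3 : Fin n → ℝ) (dl1 dl2 dl3 : Fin m → ℝ)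
    (hA1 : A.mulVec dx1 = 0) (hA2 : A.mulVec dx2 = 0) (hA3 : A.mulVec dx3 = 0)
    (hB1 : Aᵀ.mulVec dl1 + ds1 = 0) (hB2 : Aᵀ.mulVec dl2 + ds2 = 0)
    (hB3 : Aᵀ.mulVec dl3 + ds3 = 0)
    (hr1 : ∀ i, s i * dx1 i + x i * ds1 i = x i * s i)
    (hr2 : ∀ i, s i * dx2 i + x i * ds2 i = -(ν * (s i * (x0 i - xbar i))))
    (hr3 : ∀ i, s i * dx3 i + x i * ds3 i = -(ν * (x i * (s0 i - sbar i))))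
    (xd sd : Fin n → ℝ)
    (hxd : xd = dx1 + dx2 + dx3 + ν • (x0 - xbar))
    (hsd : sd = ds1 + ds2 + ds3 + ν • (s0 - sbar)) :
    euclNorm (dApp x s sd) ≤
      Real.sqrt (n * μ) + euclNorm (dApp x s ds2) + euclNorm (dInvApp x s dx3) ∧
    euclNorm (dInvApp x s xd) ≤
      Real.sqrt (n * μ) + euclNorm (dApp x s ds2) + euclNorm (dInvApp x s dx3) :=
  newton_direction_splitting_bound_general A x s hx hs μ ν hμ x0 s0 xbar sbar dx1 dx2 dx3 ds1 ds2
    ds3 dl1 hA1 hB1 hr1 hr2 hr3 xd sd hxd hsd
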